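/- Let γ > 0 and let u : [0,T)×ℝ → ℝ be a C¹ solution of the traffic flow model ∂_t u + ∂_x (u(1−u) e^{−ū}) = 0, where ū(t,x) = (1/γ)∫_x^{x+γ} u(t,y) dy, with u bounded and ∂_x u bounded on [0,T')×ℝ for every T' < T, and with initial data satisfying 0 ≤ u(0,x) ≤ 1 for all x ∈ ℝ. Then 0 ≤ u(t,x) ≤ 1 for all (t,x) ∈ [0,T)×ℝ. -/

import Mathlib

open Set

/-- The nonlocal average `ū(t,x) = (1/γ)∫_x^{x+γ} u(t,y) dy`. -/
noncomputable def ubar (γ : ℝ) (u : ℝ → ℝ → ℝ) (t x : ℝ) : ℝ :=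
  (1/γ) * ∫ y in x..(x + γ), u t y

/-!
Along a characteristic `α' = (1 - 2u) e^{-ū}`, which exists on `[0, t]` by Picard–Lindelöf
because `u` and `∂ₓu` are bounded there, the equation becomes the logistic-type ODE
`φ' = φ (1 - φ) e^{-ū} ∂ₓū` for `φ(s) = u(s, α s)`, where `∂ₓū = (u(x + γ) - u(x)) / γ` is
bounded. Hence `|(φ - 1)'| ≤ K |φ - 1|` and `|φ'| ≤ K |φ|`, and by Grönwall's inequality neither
`φ - 1` nor `-φ` can leave `(-∞, 0]`: the characteristic through `(t, x)` carries the bounds of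
`u(0, α 0)` to `u(t, x)`.
-/

open Filter Topology Function Real

theorem differentiable_of_differentiableOn_uncurry {𝕜 E F G : Type*}
    [NontriviallyNormedField 𝕜]
    [NormedAddCommGroup E] [NormedSpace 𝕜 E] [NormedAddCommGroup F] [NormedSpace 𝕜 F]
    [NormedAddCommGroup G] [NormedSpace 𝕜 G] {f : E → F → G} {S : Set E}
    (hf : DifferentiableOn 𝕜 (uncurry f) (S ×ˢ univ)) {s : E} (hs : s ∈ S) :
    Differentiable 𝕜 (f s) := fun y =>
  differentiableWithinAt_univ.mp <| (hf (s, y) ⟨hs, trivial⟩).comp y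
    ((differentiableAt_const s).prodMk differentiableAt_id).differentiableWithinAt
    fun _ _ => ⟨hs, trivial⟩

theorem exists_forall_hasDerivWithinAt_of_lipschitzWith {E : Type*} [NormedAddCommGroup E]
    [NormedSpace ℝ E] [CompleteSpace E] {v : ℝ → E → E} {a b t₀ : ℝ} {K L : NNReal}
    (ht₀ : t₀ ∈ Icc a b) (hlip : ∀ s ∈ Icc a b, LipschitzWith K (v s))
    (hcont : ∀ x, ContinuousOn (v · x) (Icc a b)) (hbdd : ∀ s ∈ Icc a b, ∀ x, ‖v s x‖ ≤ L)
    (x₀ : E) :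
    ∃ α : ℝ → E, α t₀ = x₀ ∧ ∀ s ∈ Icc a b, HasDerivWithinAt α (v s (α s)) (Icc a b) s :=
  IsPicardLindelof.exists_eq_forall_mem_Icc_hasDerivWithinAt₀ (t₀ := ⟨t₀, ht₀⟩)
    (a := Real.toNNReal (L * (b - a))) (L := L) (K := K)
    { lipschitzOnWith := fun s hs => (hlip s hs).lipschitzOnWith
      continuousOn := fun x _ => hcont x
      norm_le := fun s hs x _ => hbdd s hs x
      mul_max_le := by
        rw [NNReal.coe_zero, sub_zero]
        refine le_trans ?_ (Real.le_coe_toNNReal _)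
        gcongr
        exact max_le (by linarith [ht₀.1]) (by linarith [ht₀.2]) }

/- Grönwall's inequality needs the derivative bound at the left end point, so it is applied on
`[c, b]` and `c` is sent to `a`. -/
theorem eq_zero_of_norm_deriv_le_mul_norm_of_eq_zero_left {E : Type*} [NormedAddCommGroup E]
    [NormedSpace ℝ E] {f f' : ℝ → E} {K a b : ℝ} (hab : a ≤ b)
    (hf : ContinuousOn f (Icc a b)) (hf' : ∀ x ∈ Ioo a b, HasDerivWithinAt f (f' x) (Ici x) x)
    (ha : f a = 0) (bound : ∀ x ∈ Ioo a b, ‖f' x‖ ≤ K * ‖f x‖) : f b = 0 := by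
  rcases hab.eq_or_lt with rfl | hab
  · exact ha
  have hgronwall : ∀ c ∈ Ioo a b, ‖f b‖ ≤ ‖f c‖ * exp (K * (b - c)) := fun c hc => by
    have := norm_le_gronwallBound_of_norm_deriv_right_le (K := K) (ε := 0)
      (hf.mono (Icc_subset_Icc hc.1.le le_rfl)) (fun x hx => hf' x ⟨hc.1.trans_le hx.1, hx.2⟩)
      le_rfl (fun x hx => (bound x ⟨hc.1.trans_le hx.1, hx.2⟩).trans_eq (add_zero _).symm)
      b ⟨hc.2.le, le_rfl⟩
    rwa [gronwallBound_ε0] at this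
  have hfa : Tendsto f (𝓝[>] a) (𝓝 0) :=
    ha ▸ (hf a ⟨le_rfl, hab.le⟩).mono_of_mem_nhdsWithin (Icc_mem_nhdsGT hab)
  have hexp : Continuous fun c => exp (K * (b - c)) := by fun_prop
  have hlim : Tendsto (fun c => ‖f c‖ * exp (K * (b - c))) (𝓝[>] a) (𝓝 0) := by
    simpa using hfa.norm.mul ((hexp.tendsto a).mono_left nhdsWithin_le_nhds)
  exact norm_le_zero_iff.mp <| ge_of_tendsto hlim <|
    eventually_of_mem (Ioo_mem_nhdsGT hab) hgronwall

theorem nonpos_of_abs_deriv_le_mul_abs {w w' : ℝ → ℝ} {K a b : ℝ} (hab : a ≤ b)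
    (hw : ContinuousOn w (Icc a b)) (hw' : ∀ x ∈ Ioo a b, HasDerivWithinAt w (w' x) (Ici x) x)
    (bound : ∀ x ∈ Ioo a b, |w' x| ≤ K * |w x|) (ha : w a ≤ 0) : w b ≤ 0 := by
  by_contra! hb
  obtain ⟨c, hc, hwc⟩ := intermediate_value_Icc hab hw ⟨ha, hb.le⟩
  have := eq_zero_of_norm_deriv_le_mul_norm_of_eq_zero_left hc.2
    (hw.mono (Icc_subset_Icc hc.1 le_rfl)) (fun x hx => hw' x ⟨hc.1.trans_lt hx.1, hx.2⟩) hwc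
    (fun x hx => bound x ⟨hc.1.trans_lt hx.1, hx.2⟩)
  exact hb.ne' this

theorem mem_Icc_of_hasDerivWithinAt_logistic {φ g : ℝ → ℝ} {a b G : ℝ} (hab : a ≤ b)
    (hφ : ContinuousOn φ (Icc a b))
    (hφ' : ∀ s ∈ Ioo a b, HasDerivWithinAt φ (φ s * (1 - φ s) * g s) (Ici s) s)
    (hg : ∀ s ∈ Ioo a b, |g s| ≤ G) (ha : φ a ∈ Icc 0 1) : φ b ∈ Icc 0 1 := by
  obtain ⟨M, hM⟩ := isCompact_Icc.exists_bound_of_continuousOn hφ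
  have hM' : ∀ s ∈ Ioo a b, |φ s| ≤ M := fun s hs => hM s (Ioo_subset_Icc_self hs)
  have hM0 : 0 ≤ M := (abs_nonneg _).trans (hM a ⟨le_rfl, hab⟩)
  constructor
  · have := nonpos_of_abs_deriv_le_mul_abs (K := (1 + M) * G) hab hφ.neg
      (fun s hs => (hφ' s hs).neg) (fun s hs => ?_) (neg_nonpos.mpr ha.1)
    · exact neg_nonpos.mp this
    have h1 : |1 - φ s| ≤ 1 + M := (abs_sub _ _).trans (by rw [abs_one]; linarith [hM' s hs])
    calc |-(φ s * (1 - φ s) * g s)| = |1 - φ s| * |g s| * |-φ s| := by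
          simp only [abs_neg, abs_mul]; ring
      _ ≤ (1 + M) * G * |-φ s| := by gcongr; exact hg s hs
  · have := nonpos_of_abs_deriv_le_mul_abs (K := M * G) hab (hφ.sub continuousOn_const)
      (fun s hs => (hφ' s hs).sub_const 1) (fun s hs => ?_) (sub_nonpos.mpr ha.2)
    · exact sub_nonpos.mp this
    calc |φ s * (1 - φ s) * g s| = |φ s| * |g s| * |φ s - 1| := by
          rw [abs_mul, abs_mul, abs_sub_comm]; ring
      _ ≤ M * G * |φ s - 1| := by gcongr; exacts [hM' s hs, hg s hs]

/-- `charSpeed` is `∂_u` of the flux `u (1 - u) e^{-ū}`, and `charRate` is `e^{-ū} ∂ₓū`. -/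
noncomputable def charSpeed (γ : ℝ) (u : ℝ → ℝ → ℝ) (t x : ℝ) : ℝ :=
  (1 - 2 * u t x) * exp (-ubar γ u t x)

noncomputable def charRate (γ : ℝ) (u : ℝ → ℝ → ℝ) (t x : ℝ) : ℝ :=
  exp (-ubar γ u t x) * ((u t (x + γ) - u t x) / γ)

section

variable {γ C t : ℝ} {u : ℝ → ℝ → ℝ}

theorem hasDerivAt_ubar (hu : Continuous (u t)) (x : ℝ) :
    HasDerivAt (ubar γ u t) ((u t (x + γ) - u t x) / γ) x := by
  have hF : ∀ z, HasDerivAt (fun w => ∫ y in (0 : ℝ)..w, u t y) (u t z) z :=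
    fun z => (hu.integral_hasStrictDerivAt 0 z).hasDerivAt
  have hsplit : ubar γ u t =
      fun z => (1 / γ) * ((∫ y in (0 : ℝ)..(z + γ), u t y) - ∫ y in (0 : ℝ)..z, u t y) := by
    funext z
    rw [ubar, intervalIntegral.integral_interval_sub_left (hu.intervalIntegrable _ _)
      (hu.intervalIntegrable _ _)]
  rw [hsplit]
  exact ((((hF (x + γ)).comp x ((hasDerivAt_id x).add_const γ)).sub (hF x)).const_mul (1 / γ)
    ).congr_deriv (by simp only [mul_one]; ring)

theorem abs_ubar_le (hγ : 0 < γ) (hC : ∀ y, |u t y| ≤ C) (x : ℝ) : |ubar γ u t x| ≤ C := by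
  have h := intervalIntegral.norm_integral_le_of_norm_le_const (a := x) (b := x + γ)
    (fun y _ => (Real.norm_eq_abs (u t y)).trans_le (hC y))
  rw [add_sub_cancel_left, abs_of_pos hγ, Real.norm_eq_abs] at h
  rw [ubar, abs_mul, abs_of_pos (one_div_pos.mpr hγ), one_div_mul_eq_div, div_le_iff₀ hγ]
  exact h

theorem exp_neg_ubar_le (hγ : 0 < γ) (hC : ∀ y, |u t y| ≤ C) (x : ℝ) :
    exp (-ubar γ u t x) ≤ exp C :=
  exp_le_exp.mpr ((neg_le_abs _).trans (abs_ubar_le hγ hC x))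

theorem continuousOn_ubar_of_continuousOn_uncurry {S : Set ℝ}
    (hu : ContinuousOn (uncurry u) (S ×ˢ univ))
    (hC : ∀ s ∈ S, ∀ y, |u s y| ≤ C) (x : ℝ) : ContinuousOn (fun s => ubar γ u s x) S := by
  intro s hs
  refine continuousWithinAt_const.mul ?_
  refine intervalIntegral.continuousWithinAt_of_dominated_interval (bound := fun _ => C) ?_ ?_
    intervalIntegrable_const ?_
  · filter_upwards [self_mem_nhdsWithin] with s' hs'
    exact (continuousOn_univ.mp (hu.uncurry_left s' hs')).aestronglyMeasurable
  · filter_upwards [self_mem_nhdsWithin] with s' hs'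
    exact MeasureTheory.ae_of_all _ fun y _ => (Real.norm_eq_abs _).trans_le (hC s' hs' y)
  · exact MeasureTheory.ae_of_all _ fun y _ => hu.uncurry_right y (mem_univ y) s hs

theorem abs_one_sub_two_mul_le {a : ℝ} (h : |a| ≤ C) : |1 - 2 * a| ≤ 1 + 2 * C := by
  obtain ⟨h₁, h₂⟩ := abs_le.mp h
  exact abs_le.mpr ⟨by linarith, by linarith⟩

theorem abs_charRate_le (hγ : 0 < γ) (hC : ∀ y, |u t y| ≤ C) (x : ℝ) :
    |charRate γ u t x| ≤ exp C * (2 * C / γ) := by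
  rw [charRate, abs_mul, abs_of_pos (exp_pos _), abs_div, abs_of_pos hγ]
  gcongr ?_ * (?_ / _)
  · exact exp_neg_ubar_le hγ hC x
  · linarith [abs_sub (u t (x + γ)) (u t x), hC (x + γ), hC x]

theorem abs_charSpeed_le (hγ : 0 < γ) (hC : ∀ y, |u t y| ≤ C) (x : ℝ) :
    |charSpeed γ u t x| ≤ (1 + 2 * C) * exp C := by
  rw [charSpeed, abs_mul, abs_of_pos (exp_pos _)]
  exact mul_le_mul (abs_one_sub_two_mul_le (hC x)) (exp_neg_ubar_le hγ hC x) (exp_pos _).le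
    (by linarith [abs_nonneg (u t x), hC x])

theorem hasDerivAt_charSpeed (hu : Differentiable ℝ (u t)) (x : ℝ) :
    HasDerivAt (charSpeed γ u t)
      (-(2 * deriv (u t) x) * exp (-ubar γ u t x) - (1 - 2 * u t x) * charRate γ u t x) x := by
  have hubar := hasDerivAt_ubar (γ := γ) hu.continuous x
  exact ((((hu x).hasDerivAt.const_mul 2).const_sub 1).mul hubar.neg.exp).congr_deriv
    (by simp only [Pi.neg_apply, charRate]; ring)

theorem lipschitzWith_charSpeed (hγ : 0 < γ) (hu : Differentiable ℝ (u t))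
    (hC : ∀ y, |u t y| ≤ C ∧ |deriv (u t) y| ≤ C) :
    LipschitzWith (Real.toNNReal (2 * C * exp C + (1 + 2 * C) * (exp C * (2 * C / γ))))
      (charSpeed γ u t) := by
  refine lipschitzWith_of_nnnorm_deriv_le (fun x => (hasDerivAt_charSpeed hu x).differentiableAt)
    fun x => ?_
  rw [← NNReal.coe_le_coe, coe_nnnorm, Real.norm_eq_abs, (hasDerivAt_charSpeed hu x).deriv]
  refine le_trans ?_ (Real.le_coe_toNNReal _)
  have hC0 : 0 ≤ C := (abs_nonneg _).trans (hC x).1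
  calc |-(2 * deriv (u t) x) * exp (-ubar γ u t x) - (1 - 2 * u t x) * charRate γ u t x|
      ≤ 2 * |deriv (u t) x| * exp (-ubar γ u t x) + |1 - 2 * u t x| * |charRate γ u t x| := by
        refine (abs_sub _ _).trans_eq ?_
        rw [abs_mul, abs_mul, abs_neg, abs_mul, abs_two, abs_of_pos (exp_pos _)]
    _ ≤ 2 * C * exp C + (1 + 2 * C) * (exp C * (2 * C / γ)) := by
        gcongr 2 * ?_ * ?_ + ?_ * ?_
        exacts [(hC x).2, exp_neg_ubar_le hγ (fun y => (hC y).1) x,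
          abs_one_sub_two_mul_le (hC x).1, abs_charRate_le hγ (fun y => (hC y).1) x]

theorem continuousOn_charSpeed_of_continuousOn_uncurry {S : Set ℝ}
    (hu : ContinuousOn (uncurry u) (S ×ˢ univ))
    (hC : ∀ s ∈ S, ∀ y, |u s y| ≤ C) (x : ℝ) :
    ContinuousOn (fun s => charSpeed γ u s x) S :=
  (continuousOn_const.sub (continuousOn_const.mul (hu.uncurry_right x (mem_univ x)))).mul
    (continuousOn_ubar_of_continuousOn_uncurry hu hC x).neg.rexp

theorem exists_characteristic (hγ : 0 < γ) {a b t₀ : ℝ} (ht₀ : t₀ ∈ Icc a b)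
    (hu : ContinuousOn (uncurry u) (Icc a b ×ˢ univ))
    (hd : ∀ s ∈ Icc a b, Differentiable ℝ (u s))
    (hC : ∀ s ∈ Icc a b, ∀ y, |u s y| ≤ C ∧ |deriv (u s) y| ≤ C) (x₀ : ℝ) :
    ∃ α : ℝ → ℝ, α t₀ = x₀ ∧
      ∀ s ∈ Icc a b, HasDerivWithinAt α (charSpeed γ u s (α s)) (Icc a b) s :=
  exists_forall_hasDerivWithinAt_of_lipschitzWith (L := Real.toNNReal ((1 + 2 * C) * exp C)) ht₀
    (fun s hs => lipschitzWith_charSpeed hγ (hd s hs) (hC s hs))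
    (continuousOn_charSpeed_of_continuousOn_uncurry hu fun s hs y => (hC s hs y).1)
    (fun s hs x => (abs_charSpeed_le hγ (fun y => (hC s hs y).1) x).trans
      (Real.le_coe_toNNReal _)) x₀

theorem hasDerivAt_flux (hu : Continuous (u t)) {x u' : ℝ} (hx : HasDerivAt (u t) u' x) :
    HasDerivAt (fun y => u t y * (1 - u t y) * exp (-ubar γ u t y))
      (charSpeed γ u t x * u' - u t x * (1 - u t x) * charRate γ u t x) x :=
  ((hx.mul (hx.const_sub 1)).mul (hasDerivAt_ubar hu x).neg.exp).congr_deriv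
    (by simp only [Pi.neg_apply, Pi.mul_apply, charSpeed, charRate]; ring)

theorem hasDerivWithinAt_along_characteristic {L : ℝ × ℝ →L[ℝ] ℝ} {α : ℝ → ℝ} {S : Set ℝ}
    (hL : HasFDerivAt (uncurry u) L (t, α t)) (hu : Continuous (u t))
    (hPDE : deriv (fun r => u r (α t)) t +
      deriv (fun y => u t y * (1 - u t y) * exp (-ubar γ u t y)) (α t) = 0)
    (hα : HasDerivWithinAt α (charSpeed γ u t (α t)) S t) :
    HasDerivWithinAt (fun r => u r (α r))
      (u t (α t) * (1 - u t (α t)) * charRate γ u t (α t)) S t := by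
  have ht := hL.comp_hasDerivAt t ((hasDerivAt_id t).prodMk (hasDerivAt_const t (α t)))
  have hx := hL.comp_hasDerivAt (α t) ((hasDerivAt_const (α t) t).prodMk (hasDerivAt_id (α t)))
  change HasDerivAt (fun r => u r (α t)) (L (1, 0)) t at ht
  change HasDerivAt (u t) (L (0, 1)) (α t) at hx
  rw [ht.deriv, (hasDerivAt_flux hu hx).deriv] at hPDE
  have hL1 : L (1, charSpeed γ u t (α t)) = L (1, 0) + charSpeed γ u t (α t) * L (0, 1) := by
    rw [← smul_eq_mul, ← map_smul, ← map_add, Prod.smul_mk, smul_zero, smul_eq_mul, mul_one,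
      Prod.mk_add_mk, add_zero, zero_add]
  refine (hL.comp_hasDerivWithinAt t ((hasDerivWithinAt_id t S).prodMk hα)).congr_deriv ?_
  rw [hL1]
  linear_combination hPDE

end

theorem invariant_region_traffic_general
    (γ T : ℝ) (hγ : 0 < γ) (u : ℝ → ℝ → ℝ)
    (hu : ContDiffOn ℝ 1 (Function.uncurry u) (Ico 0 T ×ˢ univ))
    (hPDE : ∀ t x : ℝ, t ∈ Ioo 0 T →
      deriv (fun s => u s x) t +
        deriv (fun y => u t y * (1 - u t y) * Real.exp (-(ubar γ u t y))) x = 0)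
    (hbdd : ∀ T' : ℝ, T' < T → ∃ C : ℝ,
      ∀ t ∈ Ico (0 : ℝ) T', ∀ x : ℝ, |u t x| ≤ C ∧ |deriv (u t) x| ≤ C)
    (hinit : ∀ x : ℝ, u 0 x ∈ Icc (0 : ℝ) 1) :
    ∀ t ∈ Ico (0 : ℝ) T, ∀ x : ℝ, u t x ∈ Icc (0 : ℝ) 1 := by
  intro t ht x
  obtain ⟨C, hC⟩ := hbdd ((t + T) / 2) (by linarith [ht.2])
  have hCt : ∀ s ∈ Icc 0 t, ∀ y, |u s y| ≤ C ∧ |deriv (u s) y| ≤ C :=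
    fun s hs => hC s ⟨hs.1, by linarith [hs.2, ht.2]⟩
  have hIcc : Icc 0 t ⊆ Ico 0 T := fun s hs => ⟨hs.1, hs.2.trans_lt ht.2⟩
  have hcont : ContinuousOn (uncurry u) (Icc 0 t ×ˢ univ) :=
    hu.continuousOn.mono (prod_mono hIcc subset_rfl)
  have hdiff := hu.differentiableOn one_ne_zero
  obtain ⟨α, hαt, hα⟩ := exists_characteristic hγ ⟨ht.1, le_rfl⟩ hcont
    (fun s hs => differentiable_of_differentiableOn_uncurry hdiff (hIcc hs)) hCt x
  have hφ : ContinuousOn (fun s => u s (α s)) (Icc 0 t) :=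
    hcont.comp (continuousOn_id.prodMk fun s hs => (hα s hs).continuousWithinAt)
      fun s hs => ⟨hs, trivial⟩
  have hφ' : ∀ s ∈ Ioo 0 t, HasDerivWithinAt (fun r => u r (α r))
      (u s (α s) * (1 - u s (α s)) * charRate γ u s (α s)) (Ici s) s := by
    intro s hs
    have hsT : s ∈ Ioo 0 T := ⟨hs.1, hs.2.trans ht.2⟩
    have hL := (hdiff.differentiableAt (x := (s, α s))
      (prod_mem_nhds (Ico_mem_nhds hs.1 hsT.2) univ_mem)).hasFDerivAt
    exact hasDerivWithinAt_along_characteristic hL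
      (differentiable_of_differentiableOn_uncurry hdiff (Ioo_subset_Ico_self hsT)).continuous
      (hPDE s (α s) hsT)
      ((hα s (Ioo_subset_Icc_self hs)).hasDerivAt (Icc_mem_nhds hs.1 hs.2)).hasDerivWithinAt
  rw [← hαt]
  exact mem_Icc_of_hasDerivWithinAt_logistic (φ := fun s => u s (α s)) ht.1 hφ hφ'
    (fun s hs => abs_charRate_le hγ (fun y => (hCt s (Ioo_subset_Icc_self hs) y).1) (α s))
    (hinit (α 0))

/-- for a `C¹` solution `u` of the traffic model with constant potential on
`[0,T)×ℝ`, with `u` and `∂ₓu` bounded on `[0,T')×ℝ` for every `T' < T`, if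
`0 ≤ u(0,·) ≤ 1` then `0 ≤ u(t,x) ≤ 1` for all `(t,x) ∈ [0,T)×ℝ`. -/
theorem invariant_region_traffic
    (γ T : ℝ) (hγ : 0 < γ) (hT : 0 < T) (u : ℝ → ℝ → ℝ)
    (hu : ContDiffOn ℝ 1 (Function.uncurry u) (Ico 0 T ×ˢ univ))
    (hPDE : ∀ t x : ℝ, t ∈ Ioo 0 T →
      deriv (fun s => u s x) t +
        deriv (fun y => u t y * (1 - u t y) * Real.exp (-(ubar γ u t y))) x = 0)
    (hbdd : ∀ T' : ℝ, T' < T → ∃ C : ℝ,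
      ∀ t ∈ Ico (0 : ℝ) T', ∀ x : ℝ, |u t x| ≤ C ∧ |deriv (u t) x| ≤ C)
    (hinit : ∀ x : ℝ, u 0 x ∈ Icc (0 : ℝ) 1) :
    ∀ t ∈ Ico (0 : ℝ) T, ∀ x : ℝ, u t x ∈ Icc (0 : ℝ) 1 :=
  invariant_region_traffic_general γ T hγ u hu hPDE hbdd hinit
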